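/- arXiv:1705.04222 — 4 statements merged into one kernel-verified Lean document; each statement's English description precedes it below -/
import Mathlib

section
/- For every stage i ∈ {1,…,N} and every t ∈ ℤ with t ≥ t_low^i, it holds that 0 ≤ J^i(t) − J̃^i(t) ≤ ε. In particular, the truncated backward recursion J̃, which is only computed on the intervals [t_low^i, t_up^i], underestimates the true value function J by at most the error tolerance ε on all reachable states. -/
/-! The difference `J i − J̃ i` is propagated backwards through the Bellman operator. On reachable
states `t ≥ t_low^i`, the truncated recursion is the Bellman operator applied to `J̃ (i+1)`: states
below `t_low^{i+1}` are never reached, and those above `t_up^{i+1}` carry `J̃ (i+1) = 0` (this also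
covers `t > t_up^i`, where `J̃ i t = 0`). The Bellman operator is a maximum of convex combinations,
so it maps differences in `[0, ε]` to differences in `[0, ε]`. At the last stage the difference is
`0` inside the window and `J N t ∈ [0, ε]` above it. -/

open Finset

noncomputable def bellman {V : Type} [Fintype V] [Nonempty V] (p : ℤ → V → ℝ) (Tmin Tmax : ℤ)
    (f : ℤ → ℝ) (t : ℤ) : ℝ :=
  univ.sup' univ_nonempty fun v => ∑ τ ∈ Icc Tmin Tmax, p τ v * f (t + τ)

theorem sum_Icc_sub_mul_eq_sum_Icc_mul_add {R : Type*} [Semiring R] {q f : ℤ → R} {a b c d : ℤ}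
    (hq : ∀ τ ∉ Icc a b, q τ = 0) (hf : ∀ σ ∉ Icc c d, f σ = 0) (t : ℤ) :
    ∑ σ ∈ Icc c d, q (σ - t) * f σ = ∑ τ ∈ Icc a b, q τ * f (t + τ) := by
  have hsupp_f : Function.support (fun σ => q (σ - t) * f σ) ⊆ Icc c d := fun σ hσ => by
    by_contra h
    exact hσ (by simp [hf σ h])
  have hsupp_q : Function.support (fun τ => q τ * f (t + τ)) ⊆ Icc a b := fun τ hτ => by
    by_contra h
    exact hτ (by simp [hq τ h])
  rw [← finsum_eq_sum_of_support_subset _ hsupp_f, ← finsum_eq_sum_of_support_subset _ hsupp_q,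
    ← finsum_comp_equiv (Equiv.addLeft t)]
  simp

theorem Finset.sup'_sub_sup'_mem_Icc {ι α : Type*} [AddCommGroup α] [LinearOrder α]
    [IsOrderedAddMonoid α] {s : Finset ι} (hs : s.Nonempty) {f g : ι → α} {ε : α}
    (h : ∀ i ∈ s, f i - g i ∈ Set.Icc 0 ε) : s.sup' hs f - s.sup' hs g ∈ Set.Icc 0 ε := by
  constructor
  · exact sub_nonneg.2 <| sup'_mono_fun fun i hi => sub_nonneg.1 (h i hi).1
  · rw [sub_le_iff_le_add', sup'_add]
    exact sup'_mono_fun fun i hi => sub_le_iff_le_add'.1 (h i hi).2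

theorem bellman_sub_bellman_mem_Icc {V : Type} [Fintype V] [Nonempty V] {p : ℤ → V → ℝ}
    {Tmin Tmax : ℤ} (hp0 : ∀ τ v, 0 ≤ p τ v) (hpsum : ∀ v, ∑ τ ∈ Icc Tmin Tmax, p τ v = 1)
    {f g : ℤ → ℝ} {ε : ℝ} {t : ℤ} (hfg : ∀ τ ∈ Icc Tmin Tmax, f (t + τ) - g (t + τ) ∈ Set.Icc 0 ε) :
    bellman p Tmin Tmax f t - bellman p Tmin Tmax g t ∈ Set.Icc 0 ε := by
  refine sup'_sub_sup'_mem_Icc _ fun v _ => ?_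
  rw [← sum_sub_distrib]
  simp_rw [← mul_sub]
  exact (convex_Icc 0 ε).sum_mem (fun τ _ => hp0 τ v) (hpsum v) hfg

theorem ite_sup'_eq_bellman {V : Type} [Fintype V] [Nonempty V] {p : ℤ → V → ℝ}
    {Tmin Tmax lo hi lo' hi' : ℤ} {g : ℤ → ℝ}
    (hp : ∀ τ v, (τ < Tmin ∨ τ > Tmax) → p τ v = 0) (hg : ∀ σ ∉ Icc lo' hi', g σ = 0)
    (hhi : hi = hi' - Tmin) {t : ℤ} (ht : lo ≤ t) :
    (if lo ≤ t ∧ t ≤ hi then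
      univ.sup' univ_nonempty fun v => ∑ σ ∈ Icc lo' hi', p (σ - t) v * g σ
    else 0) = bellman p Tmin Tmax g t := by
  have hp' : ∀ v, ∀ τ ∉ Icc Tmin Tmax, p τ v = 0 := fun v τ hτ =>
    hp τ v (by rw [mem_Icc] at hτ; omega)
  split_ifs with hwin
  · simp only [sum_Icc_sub_mul_eq_sum_Icc_mul_add (hp' _) hg, bellman]
  · have hvanish : ∀ v, ∑ τ ∈ Icc Tmin Tmax, p τ v * g (t + τ) = 0 := fun v =>
      sum_eq_zero fun τ hτ => by
        rw [hg _ (by rw [mem_Icc] at hτ ⊢; omega), mul_zero]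
    simp only [bellman, hvanish, sup'_const]

theorem truncated_value_function_error_bound_general
    (N : ℕ)
    (V : Type) [Fintype V] [Nonempty V]
    (Tmin Tmax : ℕ → ℤ)
    (p : ℕ → ℤ → V → ℝ)
    (hp0 : ∀ i, 1 ≤ i → i ≤ N - 1 → ∀ (τ : ℤ) (v : V), 0 ≤ p i τ v)
    (hpsupp : ∀ i, 1 ≤ i → i ≤ N - 1 → ∀ (τ : ℤ) (v : V),
      (τ < Tmin i ∨ τ > Tmax i) → p i τ v = 0)
    (hpsum : ∀ i, 1 ≤ i → i ≤ N - 1 → ∀ v : V,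
      ∑ τ ∈ Finset.Icc (Tmin i) (Tmax i), p i τ v = 1)
    (J : ℕ → ℤ → ℝ)
    (hJN : ∀ t : ℤ, 0 ≤ J N t ∧ J N t ≤ 1)
    (hJrec : ∀ i, 1 ≤ i → i ≤ N - 1 → ∀ t : ℤ,
      J i t = (Finset.univ : Finset V).sup' Finset.univ_nonempty
        (fun v => ∑ τ ∈ Finset.Icc (Tmin i) (Tmax i), p i τ v * J (i + 1) (t + τ)))
    (ε : ℝ) (hε : 0 ≤ ε)
    (tlow tup : ℕ → ℤ)
    (htlowrec : ∀ i, 1 ≤ i → i ≤ N - 1 → tlow (i + 1) = tlow i + Tmin i)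
    (htupN : ∀ t : ℤ, tup N < t → J N t ≤ ε)
    (htuprec : ∀ i, 1 ≤ i → i ≤ N - 1 → tup i = tup (i + 1) - Tmin i)
    (Jt : ℕ → ℤ → ℝ)
    (hJtN : ∀ t : ℤ, Jt N t = if tlow N ≤ t ∧ t ≤ tup N then J N t else 0)
    (hJtrec : ∀ i, 1 ≤ i → i ≤ N - 1 → ∀ t : ℤ,
      Jt i t = if tlow i ≤ t ∧ t ≤ tup i then
        (Finset.univ : Finset V).sup' Finset.univ_nonempty
          (fun v => ∑ τ ∈ Finset.Icc (tlow (i + 1)) (tup (i + 1)),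
            p i (τ - t) v * Jt (i + 1) τ)
      else 0) :
    ∀ i, 1 ≤ i → i ≤ N → ∀ t : ℤ, tlow i ≤ t →
      0 ≤ J i t - Jt i t ∧ J i t - Jt i t ≤ ε := by
  have hJt_window : ∀ j, 1 ≤ j → j ≤ N → ∀ σ ∉ Icc (tlow j) (tup j), Jt j σ = 0 := by
    intro j hj1 hjN σ hσ
    rw [mem_Icc] at hσ
    rcases hjN.eq_or_lt with rfl | hjN
    · rw [hJtN, if_neg hσ]
    · rw [hJtrec j hj1 (by omega), if_neg hσ]
  have hlast : ∀ t, tlow N ≤ t → J N t - Jt N t ∈ Set.Icc 0 ε := by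
    intro t ht
    rw [hJtN]
    split_ifs with hwin
    · simpa using hε
    · simpa using ⟨(hJN t).1, htupN t (by omega)⟩
  have hstep : ∀ i, 1 ≤ i → i ≤ N - 1 →
      (∀ σ, tlow (i + 1) ≤ σ → J (i + 1) σ - Jt (i + 1) σ ∈ Set.Icc 0 ε) →
      ∀ t, tlow i ≤ t → J i t - Jt i t ∈ Set.Icc 0 ε := by
    intro i hi1 hiN hnext t ht
    rw [hJrec i hi1 hiN, hJtrec i hi1 hiN, ite_sup'_eq_bellman (hpsupp i hi1 hiN)
      (hJt_window (i + 1) (by omega) (by omega)) (htuprec i hi1 hiN) ht]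
    refine bellman_sub_bellman_mem_Icc (hp0 i hi1 hiN) (hpsum i hi1 hiN) fun τ hτ => hnext _ ?_
    rw [htlowrec i hi1 hiN]
    linarith [(mem_Icc.1 hτ).1]
  intro i hi1 hiN
  induction hiN using Nat.decreasingInduction with
  | self => exact hlast
  | of_succ i hiN ih => exact hstep i hi1 (by omega) (ih (by omega))

/-- For every stage `i ∈ {1,…,N}` and every `t ≥ tlow i`,
`0 ≤ J i t − Jt i t ≤ ε`: the truncated backward recursion underestimates the
true value function by at most the error tolerance `ε` on all reachable states. -/
theorem truncated_value_function_error_bound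
    (N : ℕ) (hN : 2 ≤ N)
    (V : Type) [Fintype V] [Nonempty V]
    (Tmin Tmax : ℕ → ℤ)
    (hT : ∀ i, 1 ≤ i → i ≤ N - 1 → Tmin i ≤ Tmax i)
    (p : ℕ → ℤ → V → ℝ)
    (hp0 : ∀ i, 1 ≤ i → i ≤ N - 1 → ∀ (τ : ℤ) (v : V), 0 ≤ p i τ v)
    (hpsupp : ∀ i, 1 ≤ i → i ≤ N - 1 → ∀ (τ : ℤ) (v : V),
      (τ < Tmin i ∨ τ > Tmax i) → p i τ v = 0)
    (hpsum : ∀ i, 1 ≤ i → i ≤ N - 1 → ∀ v : V,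
      ∑ τ ∈ Finset.Icc (Tmin i) (Tmax i), p i τ v = 1)
    (J : ℕ → ℤ → ℝ)
    (hJN : ∀ t : ℤ, 0 ≤ J N t ∧ J N t ≤ 1)
    (hJrec : ∀ i, 1 ≤ i → i ≤ N - 1 → ∀ t : ℤ,
      J i t = (Finset.univ : Finset V).sup' Finset.univ_nonempty
        (fun v => ∑ τ ∈ Finset.Icc (Tmin i) (Tmax i), p i τ v * J (i + 1) (t + τ)))
    (tS : ℤ) (ε : ℝ) (hε : 0 ≤ ε)
    (tlow tup : ℕ → ℤ)
    (htlow1 : tlow 1 = tS)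
    (htlowrec : ∀ i, 1 ≤ i → i ≤ N - 1 → tlow (i + 1) = tlow i + Tmin i)
    (htupN : ∀ t : ℤ, tup N < t → J N t ≤ ε)
    (htuprec : ∀ i, 1 ≤ i → i ≤ N - 1 → tup i = tup (i + 1) - Tmin i)
    (Jt : ℕ → ℤ → ℝ)
    (hJtN : ∀ t : ℤ, Jt N t = if tlow N ≤ t ∧ t ≤ tup N then J N t else 0)
    (hJtrec : ∀ i, 1 ≤ i → i ≤ N - 1 → ∀ t : ℤ,
      Jt i t = if tlow i ≤ t ∧ t ≤ tup i then
        (Finset.univ : Finset V).sup' Finset.univ_nonempty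
          (fun v => ∑ τ ∈ Finset.Icc (tlow (i + 1)) (tup (i + 1)),
            p i (τ - t) v * Jt (i + 1) τ)
      else 0) :
    ∀ i, 1 ≤ i → i ≤ N → ∀ t : ℤ, tlow i ≤ t →
      0 ≤ J i t - Jt i t ∧ J i t - Jt i t ≤ ε :=
  truncated_value_function_error_bound_general N V Tmin Tmax p hp0 hpsupp hpsum J hJN hJrec ε hε
    tlow tup htlowrec htupN htuprec Jt hJtN hJtrec
end

section
/- For every stage i ∈ {1,…,N} and every t ∈ ℤ, the truncated value function satisfies 0 ≤ J̃^i(t) ≤ J^i(t); i.e., truncating the backward recursion to the intervals [t_low^i, t_up^i] never overestimates the true value function and preserves nonnegativity. -/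
/-!
Backward induction on the stage. At stage `N` truncation either keeps `J^N(t)` or replaces it
by `0 ≤ J^N(t)`. At an earlier stage, for a fixed speed `v` the kernel `p_i(σ - t | v)` vanishes
off `[t + T_min^i, t + T_max^i]`, so the truncated sum over `[t_low^{i+1}, t_up^{i+1}]` only
drops nonnegative terms of the untruncated one (after the shift `σ = t + τ`) and bounds the
remaining ones termwise by the induction hypothesis; taking the maximum over `v` preserves this.
-/

open Finset

lemma sum_Icc_mul_comp_add (q g : ℤ → ℝ) (a b t : ℤ) :
    ∑ τ ∈ Icc a b, q τ * g (t + τ) = ∑ σ ∈ Icc (t + a) (t + b), q (σ - t) * g σ := by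
  rw [← map_add_left_Icc, sum_map]
  simp [addLeftEmbedding]

lemma sum_shifted_kernel_le (q g G : ℤ → ℝ) (a b t : ℤ) (A : Finset ℤ)
    (hq0 : ∀ τ, 0 ≤ q τ) (hqsupp : ∀ τ, (τ < a ∨ τ > b) → q τ = 0)
    (hg0 : ∀ σ, 0 ≤ g σ) (hgG : ∀ σ, g σ ≤ G σ) :
    ∑ σ ∈ A, q (σ - t) * g σ ≤ ∑ τ ∈ Icc a b, q τ * G (t + τ) := by
  rw [sum_Icc_mul_comp_add]
  calc ∑ σ ∈ A, q (σ - t) * g σ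
        = ∑ σ ∈ A ∩ Icc (t + a) (t + b), q (σ - t) * g σ := by
          refine (sum_subset inter_subset_left fun σ hσA hσ => ?_).symm
          have hσ' : σ ∉ Icc (t + a) (t + b) := fun h => hσ (mem_inter.2 ⟨hσA, h⟩)
          rw [mem_Icc] at hσ'
          rw [hqsupp _ (by omega), zero_mul]
    _ ≤ ∑ σ ∈ A ∩ Icc (t + a) (t + b), q (σ - t) * G σ :=
          sum_le_sum fun σ _ => mul_le_mul_of_nonneg_left (hgG σ) (hq0 _)
    _ ≤ ∑ σ ∈ Icc (t + a) (t + b), q (σ - t) * G σ :=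
          sum_le_sum_of_subset_of_nonneg inter_subset_right fun σ _ _ =>
            mul_nonneg (hq0 _) ((hg0 σ).trans (hgG σ))

lemma zero_le_sup'_univ_of_nonneg {V : Type*} [Fintype V] [Nonempty V] (f : V → ℝ)
    (hf : ∀ v, 0 ≤ f v) : 0 ≤ univ.sup' univ_nonempty f :=
  (hf (Classical.arbitrary V)).trans (le_sup' f (mem_univ _))

theorem truncated_value_function_underestimates_general
    (N : ℕ)
    (V : Type) [Fintype V] [Nonempty V]
    (Tmin Tmax : ℕ → ℤ)
    (p : ℕ → ℤ → V → ℝ)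
    (hp0 : ∀ i, 1 ≤ i → i ≤ N - 1 → ∀ (τ : ℤ) (v : V), 0 ≤ p i τ v)
    (hpsupp : ∀ i, 1 ≤ i → i ≤ N - 1 → ∀ (τ : ℤ) (v : V),
      (τ < Tmin i ∨ τ > Tmax i) → p i τ v = 0)
    (J : ℕ → ℤ → ℝ)
    (hJN : ∀ t : ℤ, 0 ≤ J N t ∧ J N t ≤ 1)
    (hJrec : ∀ i, 1 ≤ i → i ≤ N - 1 → ∀ t : ℤ,
      J i t = (Finset.univ : Finset V).sup' Finset.univ_nonempty
        (fun v => ∑ τ ∈ Finset.Icc (Tmin i) (Tmax i), p i τ v * J (i + 1) (t + τ)))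
    (tlow tup : ℕ → ℤ)
    (Jt : ℕ → ℤ → ℝ)
    (hJtN : ∀ t : ℤ, Jt N t = if tlow N ≤ t ∧ t ≤ tup N then J N t else 0)
    (hJtrec : ∀ i, 1 ≤ i → i ≤ N - 1 → ∀ t : ℤ,
      Jt i t = if tlow i ≤ t ∧ t ≤ tup i then
        (Finset.univ : Finset V).sup' Finset.univ_nonempty
          (fun v => ∑ τ ∈ Finset.Icc (tlow (i + 1)) (tup (i + 1)),
            p i (τ - t) v * Jt (i + 1) τ)
      else 0) :
    ∀ i, 1 ≤ i → i ≤ N → ∀ t : ℤ, 0 ≤ Jt i t ∧ Jt i t ≤ J i t := by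
  intro i hi1 hiN
  refine Nat.decreasingInduction' (P := fun i => ∀ t, 0 ≤ Jt i t ∧ Jt i t ≤ J i t)
    (fun k hkN hik ih t => ?_) hiN fun t => ?_
  · have hk1 : 1 ≤ k := hi1.trans hik
    have hkN' : k ≤ N - 1 := by omega
    have hJ0 : 0 ≤ J k t := by
      rw [hJrec k hk1 hkN' t]
      exact zero_le_sup'_univ_of_nonneg _ fun v => sum_nonneg fun τ _ =>
        mul_nonneg (hp0 k hk1 hkN' τ v) ((ih _).1.trans (ih _).2)
    rw [hJtrec k hk1 hkN' t]
    split_ifs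
    · refine ⟨zero_le_sup'_univ_of_nonneg _ fun v => sum_nonneg fun σ _ =>
        mul_nonneg (hp0 k hk1 hkN' _ v) (ih σ).1, ?_⟩
      rw [hJrec k hk1 hkN' t]
      exact sup'_mono_fun fun v _ => sum_shifted_kernel_le _ _ _ _ _ t _
        (fun τ => hp0 k hk1 hkN' τ v) (fun τ => hpsupp k hk1 hkN' τ v)
        (fun σ => (ih σ).1) (fun σ => (ih σ).2)
    · exact ⟨le_rfl, hJ0⟩
  · rw [hJtN t]
    split_ifs
    exacts [⟨(hJN t).1, le_rfl⟩, ⟨le_rfl, (hJN t).1⟩]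

/-- For every stage `i ∈ {1,…,N}` and every `t ∈ ℤ`, the truncated
value function satisfies `0 ≤ Jt i t ≤ J i t`: truncating the backward recursion
to the intervals `[tlow i, tup i]` never overestimates the true value function
and preserves nonnegativity. -/
theorem truncated_value_function_underestimates
    (N : ℕ) (hN : 2 ≤ N)
    (V : Type) [Fintype V] [Nonempty V]
    (Tmin Tmax : ℕ → ℤ)
    (hT : ∀ i, 1 ≤ i → i ≤ N - 1 → Tmin i ≤ Tmax i)
    (p : ℕ → ℤ → V → ℝ)
    (hp0 : ∀ i, 1 ≤ i → i ≤ N - 1 → ∀ (τ : ℤ) (v : V), 0 ≤ p i τ v)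
    (hpsupp : ∀ i, 1 ≤ i → i ≤ N - 1 → ∀ (τ : ℤ) (v : V),
      (τ < Tmin i ∨ τ > Tmax i) → p i τ v = 0)
    (hpsum : ∀ i, 1 ≤ i → i ≤ N - 1 → ∀ v : V,
      ∑ τ ∈ Finset.Icc (Tmin i) (Tmax i), p i τ v = 1)
    (J : ℕ → ℤ → ℝ)
    (hJN : ∀ t : ℤ, 0 ≤ J N t ∧ J N t ≤ 1)
    (hJrec : ∀ i, 1 ≤ i → i ≤ N - 1 → ∀ t : ℤ,
      J i t = (Finset.univ : Finset V).sup' Finset.univ_nonempty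
        (fun v => ∑ τ ∈ Finset.Icc (Tmin i) (Tmax i), p i τ v * J (i + 1) (t + τ)))
    (tS : ℤ) (ε : ℝ) (hε : 0 ≤ ε)
    (tlow tup : ℕ → ℤ)
    (htlow1 : tlow 1 = tS)
    (htlowrec : ∀ i, 1 ≤ i → i ≤ N - 1 → tlow (i + 1) = tlow i + Tmin i)
    (htupN : ∀ t : ℤ, tup N < t → J N t ≤ ε)
    (htuprec : ∀ i, 1 ≤ i → i ≤ N - 1 → tup i = tup (i + 1) - Tmin i)
    (Jt : ℕ → ℤ → ℝ)
    (hJtN : ∀ t : ℤ, Jt N t = if tlow N ≤ t ∧ t ≤ tup N then J N t else 0)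
    (hJtrec : ∀ i, 1 ≤ i → i ≤ N - 1 → ∀ t : ℤ,
      Jt i t = if tlow i ≤ t ∧ t ≤ tup i then
        (Finset.univ : Finset V).sup' Finset.univ_nonempty
          (fun v => ∑ τ ∈ Finset.Icc (tlow (i + 1)) (tup (i + 1)),
            p i (τ - t) v * Jt (i + 1) τ)
      else 0) :
    ∀ i, 1 ≤ i → i ≤ N → ∀ t : ℤ, 0 ≤ Jt i t ∧ Jt i t ≤ J i t :=
  truncated_value_function_underestimates_general N V Tmin Tmax p hp0 hpsupp J hJN hJrec tlow tup Jt
    hJtN hJtrec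
end

section
/- Inductive step of the error bound: let i ∈ {2,…,N} and suppose that (a) J^i(t) − J̃^i(t) ≤ ε for all t ∈ ℤ with t ≥ t_low^i, and (b) J^i(t) ≤ ε for all t > t_up^i. Then J^{i−1}(t) − J̃^{i−1}(t) ≤ ε for all t ∈ ℤ with t ≥ t_low^{i−1}. -/
/-!
On the window `[tlow (i-1), tup (i-1)]`, the `v`-term of `J (i-1) t` averages `J i` over
`t + [Tmin, Tmax] ⊆ [tlow i, ∞)`, where `J i ≤ Jt i + ε`. Since `Jt i` vanishes outside
`[tlow i, tup i]` and `p` outside `[Tmin, Tmax]`, the resulting average of `Jt i` is the `v`-term of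
`Jt (i-1) t`. Beyond the window, `Jt (i-1) t = 0` and `J (i-1) t` averages values of `J i` beyond
`tup i`, all at most `ε`.
-/

open Finset

namespace Finset

lemma sum_Icc_comp_add_left {α M : Type*} [AddCommMonoid α] [PartialOrder α]
    [IsOrderedCancelAddMonoid α] [ExistsAddOfLE α] [LocallyFiniteOrder α] [AddCommMonoid M]
    (f : α → M) (a b c : α) :
    ∑ x ∈ Icc a b, f (c + x) = ∑ x ∈ Icc (c + a) (c + b), f x := by
  rw [← map_add_left_Icc, sum_map]
  rfl

lemma sum_mul_le_sum_mul_add_of_le {ι R : Type*} [Semiring R] [PartialOrder R]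
    [IsOrderedRing R] {s : Finset ι} {w f g : ι → R} {c : R}
    (hw : ∀ x ∈ s, 0 ≤ w x) (hw_sum : ∑ x ∈ s, w x = 1) (hfg : ∀ x ∈ s, f x ≤ g x + c) :
    ∑ x ∈ s, w x * f x ≤ ∑ x ∈ s, w x * g x + c :=
  calc ∑ x ∈ s, w x * f x ≤ ∑ x ∈ s, (w x * g x + w x * c) :=
        sum_le_sum fun x hx => by rw [← mul_add]; exact mul_le_mul_of_nonneg_left (hfg x hx) (hw x hx)
    _ = ∑ x ∈ s, w x * g x + c := by rw [sum_add_distrib, ← sum_mul, hw_sum, one_mul]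

end Finset

section

variable {q f : ℤ → ℝ} {a b t : ℤ} {ε : ℝ}

lemma sum_Icc_mul_shift_le_sum_Icc_mul_add {g : ℤ → ℝ} {lo hi : ℤ}
    (hq : ∀ τ, 0 ≤ q τ) (hq_supp : ∀ τ, τ < a ∨ τ > b → q τ = 0) (hq_sum : ∑ τ ∈ Icc a b, q τ = 1)
    (hg_supp : ∀ σ, σ < lo ∨ hi < σ → g σ = 0) (hfg : ∀ σ, lo ≤ σ → f σ - g σ ≤ ε)
    (ht : lo ≤ t + a) :
    ∑ τ ∈ Icc a b, q τ * f (t + τ) ≤ ∑ σ ∈ Icc lo hi, q (σ - t) * g σ + ε := by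
  have hshift : ∑ σ ∈ Icc lo hi, q (σ - t) * g σ = ∑ τ ∈ Icc (lo - t) (hi - t), q τ * g (t + τ) := by
    convert (sum_Icc_comp_add_left (fun σ => q (σ - t) * g σ) (lo - t) (hi - t) t).symm using 2 <;>
      simp
  rw [hshift]
  calc ∑ τ ∈ Icc a b, q τ * f (t + τ) ≤ ∑ τ ∈ Icc a b, q τ * g (t + τ) + ε :=
        sum_mul_le_sum_mul_add_of_le (fun τ _ => hq τ) hq_sum fun τ hτ =>
          sub_le_iff_le_add'.1 (hfg (t + τ) (by grind))
    _ = ∑ τ ∈ Icc (lo - t) (hi - t), q τ * g (t + τ) + ε := by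
      congr 1
      refine sum_congr_of_eq_on_inter ?_ ?_ fun _ _ _ => rfl
      · intro τ _ hτ
        rw [hg_supp (t + τ) (by grind), mul_zero]
      · intro τ _ hτ
        rw [hq_supp τ (by grind), zero_mul]

lemma sum_Icc_mul_shift_le_of_tail {hi : ℤ}
    (hq : ∀ τ, 0 ≤ q τ) (hq_sum : ∑ τ ∈ Icc a b, q τ = 1)
    (hf_tail : ∀ σ, hi < σ → f σ ≤ ε) (ht : hi < t + a) :
    ∑ τ ∈ Icc a b, q τ * f (t + τ) ≤ ε := by
  simpa using sum_mul_le_sum_mul_add_of_le (g := 0) (fun τ _ => hq τ) hq_sum fun τ hτ => by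
    simpa using hf_tail (t + τ) (by grind)

end

theorem error_bound_inductive_step_general
    (N : ℕ)
    (V : Type) [Fintype V] [Nonempty V]
    (Tmin Tmax : ℕ → ℤ)
    (p : ℕ → ℤ → V → ℝ)
    (hp0 : ∀ i, 1 ≤ i → i ≤ N - 1 → ∀ (τ : ℤ) (v : V), 0 ≤ p i τ v)
    (hpsupp : ∀ i, 1 ≤ i → i ≤ N - 1 → ∀ (τ : ℤ) (v : V),
      (τ < Tmin i ∨ τ > Tmax i) → p i τ v = 0)
    (hpsum : ∀ i, 1 ≤ i → i ≤ N - 1 → ∀ v : V,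
      ∑ τ ∈ Finset.Icc (Tmin i) (Tmax i), p i τ v = 1)
    (J : ℕ → ℤ → ℝ)
    (hJrec : ∀ i, 1 ≤ i → i ≤ N - 1 → ∀ t : ℤ,
      J i t = (Finset.univ : Finset V).sup' Finset.univ_nonempty
        (fun v => ∑ τ ∈ Finset.Icc (Tmin i) (Tmax i), p i τ v * J (i + 1) (t + τ)))
    (ε : ℝ)
    (tlow tup : ℕ → ℤ)
    (htlowrec : ∀ i, 1 ≤ i → i ≤ N - 1 → tlow (i + 1) = tlow i + Tmin i)
    (htuprec : ∀ i, 1 ≤ i → i ≤ N - 1 → tup i = tup (i + 1) - Tmin i)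
    (Jt : ℕ → ℤ → ℝ)
    (hJtN : ∀ t : ℤ, Jt N t = if tlow N ≤ t ∧ t ≤ tup N then J N t else 0)
    (hJtrec : ∀ i, 1 ≤ i → i ≤ N - 1 → ∀ t : ℤ,
      Jt i t = if tlow i ≤ t ∧ t ≤ tup i then
        (Finset.univ : Finset V).sup' Finset.univ_nonempty
          (fun v => ∑ τ ∈ Finset.Icc (tlow (i + 1)) (tup (i + 1)),
            p i (τ - t) v * Jt (i + 1) τ)
      else 0)
    (i : ℕ) (hi2 : 2 ≤ i) (hiN : i ≤ N)
    (ha : ∀ t : ℤ, tlow i ≤ t → J i t - Jt i t ≤ ε)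
    (hb : ∀ t : ℤ, tup i < t → J i t ≤ ε) :
    ∀ t : ℤ, tlow (i - 1) ≤ t → J (i - 1) t - Jt (i - 1) t ≤ ε := by
  intro t ht
  obtain ⟨j, rfl⟩ : ∃ j, i = j + 1 := ⟨i - 1, by omega⟩
  have hj : 1 ≤ j ∧ j ≤ N - 1 := by omega
  have hlow := htlowrec j hj.1 hj.2
  have hup := htuprec j hj.1 hj.2
  have hJt_supp : ∀ σ, σ < tlow (j + 1) ∨ tup (j + 1) < σ → Jt (j + 1) σ = 0 := by
    intro σ hσ
    rcases hiN.eq_or_lt with h | h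
    · rw [h, hJtN, if_neg (by rw [← h]; omega)]
    · rw [hJtrec _ (by omega) (by omega), if_neg (by omega)]
  rw [Nat.add_sub_cancel] at ht ⊢
  rw [hJrec j hj.1 hj.2 t, hJtrec j hj.1 hj.2 t]
  split_ifs with hwindow
  · rw [sub_le_iff_le_add', Finset.sup'_add]
    exact sup'_mono_fun fun v _ => sum_Icc_mul_shift_le_sum_Icc_mul_add (hp0 j hj.1 hj.2 · v)
      (hpsupp j hj.1 hj.2 · v) (hpsum j hj.1 hj.2 v) hJt_supp ha (by omega)
  · rw [sub_zero]
    exact sup'_le _ _ fun v _ => sum_Icc_mul_shift_le_of_tail (hp0 j hj.1 hj.2 · v)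
      (hpsum j hj.1 hj.2 v) hb (by omega)

/-- Inductive step of the error bound: let `i ∈ {2,…,N}` and
suppose (a) `J i t − Jt i t ≤ ε` for all `t ≥ tlow i`, and (b) `J i t ≤ ε` for
all `t > tup i`. Then `J (i−1) t − Jt (i−1) t ≤ ε` for all `t ≥ tlow (i−1)`. -/
theorem error_bound_inductive_step
    (N : ℕ) (hN : 2 ≤ N)
    (V : Type) [Fintype V] [Nonempty V]
    (Tmin Tmax : ℕ → ℤ)
    (hT : ∀ i, 1 ≤ i → i ≤ N - 1 → Tmin i ≤ Tmax i)
    (p : ℕ → ℤ → V → ℝ)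
    (hp0 : ∀ i, 1 ≤ i → i ≤ N - 1 → ∀ (τ : ℤ) (v : V), 0 ≤ p i τ v)
    (hpsupp : ∀ i, 1 ≤ i → i ≤ N - 1 → ∀ (τ : ℤ) (v : V),
      (τ < Tmin i ∨ τ > Tmax i) → p i τ v = 0)
    (hpsum : ∀ i, 1 ≤ i → i ≤ N - 1 → ∀ v : V,
      ∑ τ ∈ Finset.Icc (Tmin i) (Tmax i), p i τ v = 1)
    (J : ℕ → ℤ → ℝ)
    (hJN : ∀ t : ℤ, 0 ≤ J N t ∧ J N t ≤ 1)
    (hJrec : ∀ i, 1 ≤ i → i ≤ N - 1 → ∀ t : ℤ,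
      J i t = (Finset.univ : Finset V).sup' Finset.univ_nonempty
        (fun v => ∑ τ ∈ Finset.Icc (Tmin i) (Tmax i), p i τ v * J (i + 1) (t + τ)))
    (tS : ℤ) (ε : ℝ) (hε : 0 ≤ ε)
    (tlow tup : ℕ → ℤ)
    (htlow1 : tlow 1 = tS)
    (htlowrec : ∀ i, 1 ≤ i → i ≤ N - 1 → tlow (i + 1) = tlow i + Tmin i)
    (htupN : ∀ t : ℤ, tup N < t → J N t ≤ ε)
    (htuprec : ∀ i, 1 ≤ i → i ≤ N - 1 → tup i = tup (i + 1) - Tmin i)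
    (Jt : ℕ → ℤ → ℝ)
    (hJtN : ∀ t : ℤ, Jt N t = if tlow N ≤ t ∧ t ≤ tup N then J N t else 0)
    (hJtrec : ∀ i, 1 ≤ i → i ≤ N - 1 → ∀ t : ℤ,
      Jt i t = if tlow i ≤ t ∧ t ≤ tup i then
        (Finset.univ : Finset V).sup' Finset.univ_nonempty
          (fun v => ∑ τ ∈ Finset.Icc (tlow (i + 1)) (tup (i + 1)),
            p i (τ - t) v * Jt (i + 1) τ)
      else 0)
    (i : ℕ) (hi2 : 2 ≤ i) (hiN : i ≤ N)
    (ha : ∀ t : ℤ, tlow i ≤ t → J i t - Jt i t ≤ ε)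
    (hb : ∀ t : ℤ, tup i < t → J i t ≤ ε) :
    ∀ t : ℤ, tlow (i - 1) ≤ t → J (i - 1) t - Jt (i - 1) t ≤ ε :=
  error_bound_inductive_step_general N V Tmin Tmax p hp0 hpsupp hpsum J hJrec ε tlow tup htlowrec
    htuprec Jt hJtN hJtrec i hi2 hiN ha hb
end

section
/- States arriving later than t_up^i can be discarded: for every stage i ∈ {1,…,N−1}, every t ∈ ℤ with t > t_up^i, and every choice of controls π_i,…,π_{N−1} with π_j : ℤ → 𝕍, the expected terminal value starting from state (i,t) satisfies Σ_{s∈ℤ} q^N(s) J^N(s) ≤ ε; i.e., once the vehicle reaches segment i later than t_up^i, its probability of a successful merge is at most ε under any control policy. -/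
/-!
Every stage takes at least `T_min^j` time steps and `t_up^{j+1} = t_up^j + T_min^j`, so
by induction on `j` the forward distribution `q^j` is a probability distribution carried by
`(t_up^j, ∞)`. At stage `N` this is exactly where `J^N ≤ ε`, so the expected terminal value
is at most `ε`.
-/

open Function Finset

/-- The law of `x + τ` for `x ∼ q`, when from position `x` the jump `τ ∈ I` has weight `w τ x`;
with `w τ x = p_j(τ | π_j(x))` this is the step `q^j ↦ q^{j+1}`. -/
def stepLaw {G R : Type*} [AddGroup G] [Semiring R] (I : Finset G) (w : G → G → R)
    (q : G → R) (s : G) : R :=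
  ∑ τ ∈ I, w τ (s - τ) * q (s - τ)

section stepLaw

variable {G R : Type*} [AddGroup G] [Semiring R] (I : Finset G) (w : G → G → R) {q : G → R}

theorem hasFiniteSupport_stepLaw (hq : q.HasFiniteSupport) :
    (stepLaw I w q).HasFiniteSupport := by
  refine HasFiniteSupport.sum (fun τ ↦ ?_) I
  exact (hq.mul_right (w τ)).comp_of_injective sub_left_injective

theorem finsum_stepLaw (hq : q.HasFiniteSupport) :
    ∑ᶠ s, stepLaw I w q s = ∑ᶠ x, (∑ τ ∈ I, w τ x) * q x := by
  have hjump : ∀ τ, (fun x ↦ w τ x * q x).HasFiniteSupport := fun τ ↦ hq.mul_right _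
  calc ∑ᶠ s, stepLaw I w q s = ∑ τ ∈ I, ∑ᶠ s, w τ (s - τ) * q (s - τ) :=
        finsum_sum_comm I _ fun τ _ ↦ (hjump τ).comp_of_injective sub_left_injective
    _ = ∑ τ ∈ I, ∑ᶠ x, w τ x * q x :=
        sum_congr rfl fun τ _ ↦ finsum_comp_equiv (Equiv.subRight τ) (f := fun x ↦ w τ x * q x)
    _ = ∑ᶠ x, (∑ τ ∈ I, w τ x) * q x := by
        simp_rw [sum_mul]
        exact (finsum_sum_comm I _ fun τ _ ↦ hjump τ).symm

end stepLaw

theorem support_stepLaw_subset_Ioi {G R : Type*} [AddCommGroup G] [PartialOrder G]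
    [IsOrderedAddMonoid G] [Semiring R] {I : Finset G} (w : G → G → R) {q : G → R} {a b : G}
    (hq : support q ⊆ Set.Ioi a) (hI : ∀ τ ∈ I, b ≤ τ) :
    support (stepLaw I w q) ⊆ Set.Ioi (a + b) := by
  intro s hs
  obtain ⟨τ, hτ, hjump⟩ := exists_ne_zero_of_sum_ne_zero hs
  have hlate : a < s - τ := hq (right_ne_zero_of_mul hjump)
  calc a + b ≤ a + τ := add_le_add_right (hI τ hτ) a
    _ < s := lt_sub_iff_add_lt.mp hlate

structure IsFiniteProbAbove {G : Type*} [Preorder G] (q : G → ℝ) (a : G) : Prop where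
  hasFiniteSupport : q.HasFiniteSupport
  nonneg : ∀ s, 0 ≤ q s
  finsum_eq_one : ∑ᶠ s, q s = 1
  support_subset : support q ⊆ Set.Ioi a

namespace IsFiniteProbAbove

variable {G : Type*}

theorem ite_eq [Preorder G] [DecidableEq G] {a t : G} (ht : a < t) :
    IsFiniteProbAbove (fun s ↦ if s = t then (1 : ℝ) else 0) a :=
  have hsupp : support (fun s ↦ if s = t then (1 : ℝ) else 0) ⊆ {t} :=
    fun s hs ↦ by_contra fun hst ↦ hs (if_neg hst)
  { hasFiniteSupport := (Set.finite_singleton t).subset hsupp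
    nonneg := fun s ↦ by split_ifs <;> norm_num
    finsum_eq_one := by rw [finsum_eq_single _ t fun s hst ↦ if_neg hst, if_pos rfl]
    support_subset := hsupp.trans (Set.singleton_subset_iff.mpr ht) }

theorem stepLaw [AddCommGroup G] [PartialOrder G] [IsOrderedAddMonoid G] {q : G → ℝ} {a b : G}
    {I : Finset G} {w : G → G → ℝ} (hq : IsFiniteProbAbove q a) (hw₀ : ∀ τ x, 0 ≤ w τ x)
    (hw₁ : ∀ x, ∑ τ ∈ I, w τ x = 1) (hI : ∀ τ ∈ I, b ≤ τ) :
    IsFiniteProbAbove (stepLaw I w q) (a + b) where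
  hasFiniteSupport := hasFiniteSupport_stepLaw I w hq.hasFiniteSupport
  nonneg s := sum_nonneg fun τ _ ↦ mul_nonneg (hw₀ _ _) (hq.nonneg _)
  finsum_eq_one := by
    simp only [finsum_stepLaw I w hq.hasFiniteSupport, hw₁, one_mul, hq.finsum_eq_one]
  support_subset := support_stepLaw_subset_Ioi w hq.support_subset hI

theorem finsum_mul_le [Preorder G] {q : G → ℝ} {a : G} (hq : IsFiniteProbAbove q a)
    {g : G → ℝ} {ε : ℝ} (hg : ∀ s, a < s → g s ≤ ε) : ∑ᶠ s, q s * g s ≤ ε := by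
  calc ∑ᶠ s, q s * g s ≤ ∑ᶠ s, q s * ε := by
        refine finsum_le_finsum' (hq.hasFiniteSupport.mul_left g)
          (hq.hasFiniteSupport.mul_left _) fun s ↦ ?_
        by_cases hs : q s = 0
        · simp [hs]
        · exact mul_le_mul_of_nonneg_left (hg s (hq.support_subset hs)) (hq.nonneg s)
    _ = ε := by rw [← finsum_mul, hq.finsum_eq_one, one_mul]

end IsFiniteProbAbove

theorem late_states_discardable_general
    (N : ℕ)
    (V : Type)
    (Tmin Tmax : ℕ → ℤ)
    (p : ℕ → ℤ → V → ℝ)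
    (hp0 : ∀ i, 1 ≤ i → i ≤ N - 1 → ∀ (τ : ℤ) (v : V), 0 ≤ p i τ v)
    (hpsum : ∀ i, 1 ≤ i → i ≤ N - 1 → ∀ v : V,
      ∑ τ ∈ Finset.Icc (Tmin i) (Tmax i), p i τ v = 1)
    (JN : ℤ → ℝ)
    (ε : ℝ)
    (tup : ℕ → ℤ)
    (htupN : ∀ t : ℤ, tup N < t → JN t ≤ ε)
    (htuprec : ∀ i, 1 ≤ i → i ≤ N - 1 → tup i = tup (i + 1) - Tmin i)
    (i : ℕ) (hi1 : 1 ≤ i) (hiN : i ≤ N - 1)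
    (t : ℤ) (ht : tup i < t)
    (π : ℕ → ℤ → V)
    (q : ℕ → ℤ → ℝ)
    (hqi : ∀ s : ℤ, q i s = if s = t then 1 else 0)
    (hqrec : ∀ j, i ≤ j → j ≤ N - 1 → ∀ s : ℤ,
      q (j + 1) s = ∑ τ ∈ Finset.Icc (Tmin j) (Tmax j),
        p j τ (π j (s - τ)) * q j (s - τ)) :
    ∑ᶠ s : ℤ, q N s * JN s ≤ ε := by
  have hlate : ∀ j, i ≤ j → j ≤ N → IsFiniteProbAbove (q j) (tup j) := by
    intro j hij
    induction j, hij using Nat.le_induction with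
    | base => exact fun _ ↦ funext hqi ▸ IsFiniteProbAbove.ite_eq ht
    | succ k hik ih =>
      intro hkN
      have hk : 1 ≤ k ∧ k ≤ N - 1 := by omega
      have hstep : q (k + 1) = stepLaw (Icc (Tmin k) (Tmax k)) (fun τ x ↦ p k τ (π k x)) (q k) :=
        funext (hqrec k hik hk.2)
      rw [hstep, ← eq_sub_iff_add_eq.mp (htuprec k hk.1 hk.2)]
      exact (ih (by omega)).stepLaw (fun τ _ ↦ hp0 k hk.1 hk.2 τ _) (fun _ ↦ hpsum k hk.1 hk.2 _)
        fun τ hτ ↦ (mem_Icc.mp hτ).1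
  exact (hlate N (by omega) le_rfl).finsum_mul_le htupN

/-- States arriving later than `tup i` can be discarded: for
every stage `i ∈ {1,…,N−1}`, every `t > tup i`, and every choice of controls
`π i, …, π (N−1)`, the expected terminal value starting from state `(i, t)`
satisfies `Σ_s q N s * JN s ≤ ε`: once the vehicle reaches segment `i` later
than `tup i`, its probability of a successful merge is at most `ε` under any
control policy. -/
theorem late_states_discardable
    (N : ℕ) (hN : 2 ≤ N)
    (V : Type) [Fintype V] [Nonempty V]
    (Tmin Tmax : ℕ → ℤ)
    (hT : ∀ i, 1 ≤ i → i ≤ N - 1 → Tmin i ≤ Tmax i)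
    (p : ℕ → ℤ → V → ℝ)
    (hp0 : ∀ i, 1 ≤ i → i ≤ N - 1 → ∀ (τ : ℤ) (v : V), 0 ≤ p i τ v)
    (hpsupp : ∀ i, 1 ≤ i → i ≤ N - 1 → ∀ (τ : ℤ) (v : V),
      (τ < Tmin i ∨ τ > Tmax i) → p i τ v = 0)
    (hpsum : ∀ i, 1 ≤ i → i ≤ N - 1 → ∀ v : V,
      ∑ τ ∈ Finset.Icc (Tmin i) (Tmax i), p i τ v = 1)
    (JN : ℤ → ℝ)
    (hJN : ∀ t : ℤ, 0 ≤ JN t ∧ JN t ≤ 1)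
    (ε : ℝ) (hε : 0 ≤ ε)
    (tup : ℕ → ℤ)
    (htupN : ∀ t : ℤ, tup N < t → JN t ≤ ε)
    (htuprec : ∀ i, 1 ≤ i → i ≤ N - 1 → tup i = tup (i + 1) - Tmin i)
    (i : ℕ) (hi1 : 1 ≤ i) (hiN : i ≤ N - 1)
    (t : ℤ) (ht : tup i < t)
    (π : ℕ → ℤ → V)
    (q : ℕ → ℤ → ℝ)
    (hqi : ∀ s : ℤ, q i s = if s = t then 1 else 0)
    (hqrec : ∀ j, i ≤ j → j ≤ N - 1 → ∀ s : ℤ,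
      q (j + 1) s = ∑ τ ∈ Finset.Icc (Tmin j) (Tmax j),
        p j τ (π j (s - τ)) * q j (s - τ)) :
    ∑ᶠ s : ℤ, q N s * JN s ≤ ε :=
  late_states_discardable_general N V Tmin Tmax p hp0 hpsum JN ε tup htupN htuprec i hi1 hiN t ht π
    q hqi hqrec
end
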